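/- Let H be a finitely generated abelian group and Σ a nonempty set of primes. Then the Σ-torsion subgroup of the quotient H^{∧,Σ}/(H/H^{tor,Σ'}) is trivial, where Σ' is the complement of Σ, H^{tor,Σ'} is the prime-to-Σ torsion of H, and H/H^{tor,Σ'} is embedded in the Σ-adic completion H^{∧,Σ} naturally. -/

import Mathlib

section Completions

variable (H : Type*) [AddCommGroup H]

/-- Multiplication by `N` as an additive group homomorphism. -/
def nsmulHom (N : ℕ) : H →+ H :=
  AddMonoidHom.mk' (fun x => N • x) (fun a b => smul_add N a b)

@[simp] lemma nsmulHom_apply (N : ℕ) (x : H) : nsmulHom H N x = N • x := rfl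

/-- The subgroup `N·H` of `H`. -/
def nsub (N : ℕ) : AddSubgroup H := (nsmulHom H N).range

/-- Transition map `H/NH → H/MH` for `M ∣ N`. -/
def transMap {M N : ℕ} (h : M ∣ N) : H ⧸ nsub H N →+ H ⧸ nsub H M :=
  QuotientAddGroup.map _ _ (AddMonoidHom.id H) (by
    rintro x ⟨y, rfl⟩
    obtain ⟨k, rfl⟩ := h
    exact ⟨k • y, by simp [mul_smul]⟩)

/-- The completion of `H` along the family of quotients `H/NH`, for `N` ranging over a set
`S` of positive integers (ordered by divisibility): the subgroup of compatible families in
`∏_{N ∈ S} H/NH`. -/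
def complAlong (S : Set ℕ) : AddSubgroup (∀ N : S, H ⧸ nsub H (N : ℕ)) where
  carrier := {x | ∀ (Mi Ni : S) (h : (Mi : ℕ) ∣ (Ni : ℕ)), transMap H h (x Ni) = x Mi}
  zero_mem' := by intro Mi Ni h; simp
  add_mem' := by
    intro x y hx hy Mi Ni h
    simp only [Pi.add_apply, map_add, hx Mi Ni h, hy Mi Ni h]
  neg_mem' := by
    intro x hx Mi Ni h
    simp only [Pi.neg_apply, map_neg, hx Mi Ni h]

/-- The natural (diagonal) map `H → lim_{N ∈ S} H/NH`. -/
def diagMap (S : Set ℕ) : H →+ complAlong H S where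
  toFun h := ⟨fun _ => QuotientAddGroup.mk h, by
    intro Mi Ni hd
    rfl⟩
  map_zero' := rfl
  map_add' a b := rfl

end Completions

/-- `N` is a `Σ`-integer: positive and all its prime factors lie in `S`. -/
def IsSigmaInt (S : Set ℕ) (N : ℕ) : Prop :=
  0 < N ∧ ∀ p : ℕ, p.Prime → p ∣ N → p ∈ S

/-!
Write `ι : H → Ĥ` for the diagonal map. If `N • y = ι h`, reading this at level `N` gives
`h = N • a`, so `y - ι a` is `N`-torsion and it suffices to show that an `N`-torsion element `z`
of `Ĥ` comes from `H`. At each level `M` the component `z_M` has representatives in the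
`N`-torsion `H[N]` (lift `z_{MN}` to `a` with `N • a = MN • b`, and take `a - M • b`).
These sets of representatives are nonempty, shrink along divisibility, and live in the finite
group `H[N]`, so they have a common element `t`, and `z = ι t`.
-/

lemma IsSigmaInt.mul {S : Set ℕ} {M N : ℕ} (hM : IsSigmaInt S M) (hN : IsSigmaInt S N) :
    IsSigmaInt S (M * N) :=
  ⟨Nat.mul_pos hM.1 hN.1, fun p hp hd => (hp.dvd_mul.mp hd).elim (hM.2 p hp) (hN.2 p hp)⟩

lemma Set.nonempty_iInter_of_directed_of_finite {α ι : Type*} [Finite α] [Nonempty ι]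
    (T : ι → Set α) (hdir : Directed (· ⊇ ·) T) (hne : ∀ i, (T i).Nonempty) :
    (⋂ i, T i).Nonempty :=
  letI : TopologicalSpace α := ⊥
  haveI : DiscreteTopology α := ⟨rfl⟩
  IsCompact.nonempty_iInter_of_directed_nonempty_isCompact_isClosed T hdir hne
    (fun i => (T i).toFinite.isCompact) (fun i => isClosed_discrete (T i))

section Completions

variable {H : Type*} [AddCommGroup H]

@[simp] lemma transMap_mk {M N : ℕ} (h : M ∣ N) (a : H) :
    transMap H h (QuotientAddGroup.mk a) = QuotientAddGroup.mk a := rfl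

@[simp] lemma diagMap_apply_coe (S : Set ℕ) (h : H) (M : S) :
    (diagMap H S h).1 M = QuotientAddGroup.mk h := rfl

lemma complAlong_apply_of_dvd {S : Set ℕ} (z : complAlong H S) (M N : S)
    (h : (M : ℕ) ∣ (N : ℕ)) : z.1 M = transMap H h (z.1 N) :=
  (z.2 M N h).symm

lemma finite_ker_nsmulHom (hfg : AddGroup.FG H) {N : ℕ} (hN : 0 < N) :
    Finite (nsmulHom H N).ker := by
  have : Module.Finite ℤ H := Module.Finite.iff_addGroup_fg.mpr hfg
  have : AddGroup.FG (nsmulHom H N).ker :=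
    Module.Finite.iff_addGroup_fg.mp <| Module.Finite.iff_fg.mpr <|
      IsNoetherian.noetherian (AddSubgroup.toIntSubmodule (nsmulHom H N).ker)
  exact AddCommGroup.finite_of_fg_isAddTorsion _ fun t =>
    isOfFinAddOrder_iff_nsmul_eq_zero.mpr ⟨N, hN, Subtype.ext t.2⟩

variable {S : Set ℕ}

lemma exists_mem_ker_mk_eq_of_nsmul_eq_zero {N : ℕ} {z : complAlong H S} (hz : N • z = 0)
    (M : S) (hMN : (M : ℕ) * N ∈ S) :
    ∃ t ∈ (nsmulHom H N).ker, (QuotientAddGroup.mk t : H ⧸ nsub H M) = z.1 M := by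
  obtain ⟨a, ha⟩ := QuotientAddGroup.mk_surjective (z.1 ⟨_, hMN⟩)
  obtain ⟨b, hb⟩ : N • a ∈ nsub H (M * N) := by
    rw [← QuotientAddGroup.eq_zero_iff, QuotientAddGroup.mk_nsmul, ha]
    simpa using congrFun (congrArg Subtype.val hz) ⟨_, hMN⟩
  refine ⟨a - (M : ℕ) • b, ?_, ?_⟩
  · rw [nsmulHom_apply] at hb
    rw [AddMonoidHom.mem_ker, nsmulHom_apply, smul_sub, smul_smul, mul_comm, hb, sub_self]
  · rw [complAlong_apply_of_dvd z M ⟨_, hMN⟩ ⟨N, rfl⟩, ← ha, transMap_mk, QuotientAddGroup.eq]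
    exact ⟨b, by simp⟩

lemma mem_range_diagMap_of_nsmul_eq_zero (hfg : AddGroup.FG H)
    (hS : ∀ M ∈ S, ∀ M' ∈ S, M * M' ∈ S) {N : ℕ} (hN0 : 0 < N) (hN : N ∈ S)
    {z : complAlong H S} (hz : N • z = 0) : z ∈ (diagMap H S).range := by
  have := finite_ker_nsmulHom hfg hN0
  have : Nonempty S := ⟨⟨N, hN⟩⟩
  let T : S → Set (nsmulHom H N).ker :=
    fun M => {t | (QuotientAddGroup.mk (t : H) : H ⧸ nsub H M) = z.1 M}
  have hT_anti : ∀ M M' : S, (M : ℕ) ∣ M' → T M' ⊆ T M := fun M M' h t ht =>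
    ((complAlong_apply_of_dvd z M M' h).trans (congrArg (transMap H h) ht.symm)).symm
  obtain ⟨t, ht⟩ := Set.nonempty_iInter_of_directed_of_finite T
    (fun M M' => ⟨⟨M * M', hS _ M.2 _ M'.2⟩, hT_anti _ _ (dvd_mul_right _ _),
      hT_anti _ _ (dvd_mul_left _ _)⟩)
    (fun M => by
      obtain ⟨t, ht, htM⟩ := exists_mem_ker_mk_eq_of_nsmul_eq_zero hz M (hS _ M.2 _ hN)
      exact ⟨⟨t, ht⟩, htM⟩)
  exact ⟨t, Subtype.ext (funext fun M => Set.mem_iInter.mp ht M)⟩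

lemma mem_nsub_of_diagMap_eq_nsmul {N : ℕ} (hN : N ∈ S) {h : H} {y : complAlong H S}
    (hy : diagMap H S h = N • y) : h ∈ nsub H N := by
  obtain ⟨a, ha⟩ := QuotientAddGroup.mk_surjective (y.1 ⟨N, hN⟩)
  rw [← QuotientAddGroup.eq_zero_iff]
  have := congrFun (congrArg Subtype.val hy) ⟨N, hN⟩
  rw [diagMap_apply_coe, AddSubgroup.coe_nsmul, Pi.smul_apply] at this
  rw [this, ← ha, ← QuotientAddGroup.mk_nsmul, QuotientAddGroup.eq_zero_iff]
  exact ⟨a, rfl⟩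

lemma mem_range_diagMap_of_nsmul_mem (hfg : AddGroup.FG H)
    (hS : ∀ M ∈ S, ∀ M' ∈ S, M * M' ∈ S) {N : ℕ} (hN0 : 0 < N) (hN : N ∈ S)
    {y : complAlong H S} (hy : N • y ∈ (diagMap H S).range) : y ∈ (diagMap H S).range := by
  obtain ⟨h, hh⟩ := hy
  obtain ⟨a, rfl⟩ := mem_nsub_of_diagMap_eq_nsmul hN hh
  have hz : N • (y - diagMap H S a) = 0 := by
    rw [nsmulHom_apply] at hh
    rw [smul_sub, ← map_nsmul, hh, sub_self]
  obtain ⟨t, ht⟩ := mem_range_diagMap_of_nsmul_eq_zero hfg hS hN0 hN hz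
  exact ⟨t + a, by rw [map_add, ht, sub_add_cancel]⟩

end Completions

theorem stmt_12_general (S : Set ℕ)
    (H : Type*) [AddCommGroup H] (hfg : AddGroup.FG H) :
    ∀ (x : ↥(complAlong H {N | IsSigmaInt S N}) ⧸ (diagMap H {N | IsSigmaInt S N}).range)
      (N : ℕ), IsSigmaInt S N → N • x = 0 → x = 0 := by
  intro x N hN hNx
  obtain ⟨y, rfl⟩ := QuotientAddGroup.mk_surjective x
  rw [← QuotientAddGroup.mk_nsmul, QuotientAddGroup.eq_zero_iff] at hNx
  rw [QuotientAddGroup.eq_zero_iff]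
  exact mem_range_diagMap_of_nsmul_mem hfg (fun _ hM _ hM' => hM.mul hM') hN.1 hN hNx

/-- Let `H` be a finitely generated abelian group and `Σ` a nonempty set of
primes. The copy of `H/H^{tor,Σ'}` inside the `Σ`-adic completion `H^{∧,Σ}` is the image of
the natural map `H → H^{∧,Σ}`; the claim is that the quotient
`H^{∧,Σ}/(H/H^{tor,Σ'})` has trivial `Σ`-torsion: it has no nontrivial `N`-torsion for any
`Σ`-integer `N`. -/
theorem stmt_12 (S : Set ℕ) (hS : S.Nonempty) (hSp : ∀ p ∈ S, Nat.Prime p)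
    (H : Type*) [AddCommGroup H] (hfg : AddGroup.FG H) :
    ∀ (x : ↥(complAlong H {N | IsSigmaInt S N}) ⧸ (diagMap H {N | IsSigmaInt S N}).range)
      (N : ℕ), IsSigmaInt S N → N • x = 0 → x = 0 :=
  stmt_12_general S H hfg
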